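/- Let W_1, ..., W_L ∈ ℂ^{n×n}, b ∈ ℂⁿ, and let X ⊂ ℂⁿ be a bounded set. Then there exist bias vectors β_1, ..., β_L ∈ ℂⁿ such that for all x ∈ X, the network f_{W_L,β_L} ∘ ... ∘ f_{W_1,β_1}(x) with f_{W_i,β_i}(x) = ReLU(W_i x + β_i) equals ReLU(W_L W_{L−1} ··· W_1 x + b). In other words, on any bounded set, intermediate ReLUs can be made inactive by suitable bias shifts so the network computes a single ReLU of a matrix product. -/

import Mathlib

/-! Choose `Ω` bounding `‖W_j ⋯ W_1 x‖` for all `j < L` and `x ∈ X`. Carrying the offset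
`Ω (1 + i)` through every hidden layer keeps each pre-activation `W_j ⋯ W_1 x + Ω (1 + i)` in the
closed first quadrant of every coordinate, where ReLU is the identity; each bias subtracts the
image of the previous offset, so the offsets telescope and the last bias replaces the final
offset by `b`. -/

/-- Componentwise complex ReLU: `ReLU(z) = max(0, Re z) + i·max(0, Im z)`. -/
noncomputable def creluC {n : ℕ} (z : EuclideanSpace ℂ (Fin n)) : EuclideanSpace ℂ (Fin n) :=
  WithLp.toLp 2 (fun i => Complex.mk (max 0 (z i).re) (max 0 (z i).im))

/-- The deep ReLU network `f_{W_L,β_L} ∘ ⋯ ∘ f_{W_1,β_1}` (0-indexed), where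
`f_{W,β}(x) = ReLU(Wx + β)`. -/
noncomputable def reluNet {n : ℕ} (W : ℕ → Matrix (Fin n) (Fin n) ℂ)
    (β : ℕ → EuclideanSpace ℂ (Fin n)) : ℕ → EuclideanSpace ℂ (Fin n) → EuclideanSpace ℂ (Fin n)
  | 0, x => x
  | (L + 1), x => creluC (Matrix.toEuclideanLin (W L) (reluNet W β L x) + β L)

/-- The ordered matrix product `W_{L} ⋯ W_1` (0-indexed: `W (L-1) * ⋯ * W 0`). -/
noncomputable def matProd {n : ℕ} (W : ℕ → Matrix (Fin n) (Fin n) ℂ) : ℕ → Matrix (Fin n) (Fin n) ℂ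
  | 0 => 1
  | (L + 1) => W L * matProd W L

theorem Bornology.IsBounded.exists_forall_norm_apply_le {𝕜 E F ι : Type*}
    [NontriviallyNormedField 𝕜] [SeminormedAddCommGroup E] [SeminormedAddCommGroup F]
    [NormedSpace 𝕜 E] [NormedSpace 𝕜 F] [Finite ι] (f : ι → E →L[𝕜] F) {X : Set E}
    (hX : Bornology.IsBounded X) : ∃ C, ∀ i, ∀ x ∈ X, ‖f i x‖ ≤ C := by
  obtain ⟨C, hC⟩ :=
    (Bornology.isBounded_iUnion.2 fun i => (f i).lipschitz.isBounded_image hX).exists_norm_le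
  exact ⟨C, fun i x hx => hC _ (Set.mem_iUnion.2 ⟨i, x, hx, rfl⟩)⟩

theorem creluC_eq_self {n : ℕ} {z : EuclideanSpace ℂ (Fin n)}
    (h : ∀ i, 0 ≤ (z i).re ∧ 0 ≤ (z i).im) : creluC z = z := by
  ext i
  simp [creluC, max_eq_right (h i).1, max_eq_right (h i).2]

/-- The offset `Ω (1 + i) 𝟙ₙ` carried through the hidden layers. -/
noncomputable def quadrantShift (n : ℕ) (Ω : ℝ) : EuclideanSpace ℂ (Fin n) :=
  WithLp.toLp 2 fun _ => ⟨Ω, Ω⟩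

theorem creluC_add_quadrantShift {n : ℕ} {v : EuclideanSpace ℂ (Fin n)} {Ω : ℝ} (hv : ‖v‖ ≤ Ω) :
    creluC (v + quadrantShift n Ω) = v + quadrantShift n Ω := by
  refine creluC_eq_self fun i => ?_
  have hvi : ‖v i‖ ≤ Ω := (PiLp.norm_apply_le v i).trans hv
  have hre := (abs_le.1 ((Complex.abs_re_le_norm (v i)).trans hvi)).1
  have him := (abs_le.1 ((Complex.abs_im_le_norm (v i)).trans hvi)).1
  simp only [quadrantShift, PiLp.add_apply, Complex.add_re, Complex.add_im]
  constructor <;> linarith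

theorem toEuclideanLin_matProd_succ {n : ℕ} (W : ℕ → Matrix (Fin n) (Fin n) ℂ) (k : ℕ)
    (x : EuclideanSpace ℂ (Fin n)) :
    Matrix.toEuclideanLin (matProd W (k + 1)) x =
      Matrix.toEuclideanLin (W k) (Matrix.toEuclideanLin (matProd W k) x) := by
  simp [matProd, Matrix.toLpLin_apply, Matrix.mulVec_mulVec]

/-- The bias of layer `j` that turns the offset `c j` carried by its input into the offset
`c (j + 1)` of its pre-activation. -/
noncomputable def telescopingBias {n : ℕ} (W : ℕ → Matrix (Fin n) (Fin n) ℂ)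
    (c : ℕ → EuclideanSpace ℂ (Fin n)) (j : ℕ) : EuclideanSpace ℂ (Fin n) :=
  c (j + 1) - Matrix.toEuclideanLin (W j) (c j)

theorem reluNet_telescopingBias {n : ℕ} (W : ℕ → Matrix (Fin n) (Fin n) ℂ)
    {c : ℕ → EuclideanSpace ℂ (Fin n)} (hc : c 0 = 0) {x : EuclideanSpace ℂ (Fin n)} :
    ∀ M, (∀ j < M, creluC (Matrix.toEuclideanLin (matProd W (j + 1)) x + c (j + 1)) =
        Matrix.toEuclideanLin (matProd W (j + 1)) x + c (j + 1)) →
      reluNet W (telescopingBias W c) (M + 1) x =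
        creluC (Matrix.toEuclideanLin (matProd W (M + 1)) x + c (M + 1))
  | 0, _ => by simp [reluNet, telescopingBias, hc, matProd]
  | M + 1, h => by
    rw [reluNet, reluNet_telescopingBias W hc M fun j hj => h j (by omega), h M (by omega),
      telescopingBias, map_add, ← toEuclideanLin_matProd_succ, add_add_sub_cancel]

/-- Bias-shift lemma: on any bounded set `X ⊆ ℂⁿ`, there are biases `β_1,…,β_L` making
all intermediate ReLUs inactive, so that the `L`-layer ReLU network with matrices
`W_1,…,W_L` computes `x ↦ ReLU(W_L ⋯ W_1 x + b)` on `X`. -/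
theorem exists_bias_relu_net_eq_relu_prod {n L : ℕ} (hL : 1 ≤ L)
    (W : ℕ → Matrix (Fin n) (Fin n) ℂ) (b : EuclideanSpace ℂ (Fin n))
    (X : Set (EuclideanSpace ℂ (Fin n))) (hX : Bornology.IsBounded X) :
    ∃ β : ℕ → EuclideanSpace ℂ (Fin n), ∀ x ∈ X,
      reluNet W β L x = creluC (Matrix.toEuclideanLin (matProd W L) x + b) := by
  obtain ⟨M, rfl⟩ : ∃ M, L = M + 1 := ⟨L - 1, by omega⟩
  obtain ⟨Ω, hΩ⟩ := hX.exists_forall_norm_apply_le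
    fun j : Fin M => Matrix.toEuclideanCLM (n := Fin n) (𝕜 := ℂ) (matProd W (j + 1))
  let c : ℕ → EuclideanSpace ℂ (Fin n) := fun j =>
    if j = 0 then 0 else if j = M + 1 then b else quadrantShift n Ω
  refine ⟨telescopingBias W c, fun x hx => ?_⟩
  have hidden : ∀ j < M, c (j + 1) = quadrantShift n Ω := fun j hj => by
    simp only [c, Nat.add_one_ne_zero, add_left_inj, hj.ne, if_false]
  rw [reluNet_telescopingBias W (c := c) (by simp [c]) M fun j hj => by
    rw [hidden j hj]; exact creluC_add_quadrantShift (hΩ ⟨j, hj⟩ x hx)]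
  simp [c]
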